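/- Let G be a loopless finite connected graph with at least one cycle (i.e., G is not a tree). Then there is no divisor d on G with deg(d) = 1 and r_G(d) ≥ 1. -/

import Mathlib

open scoped Classical

namespace BN

/-- A finite multigraph: `E u v` is the number of edges (other than loops)
between distinct vertices `u` and `v`, and `loops v` is the number of loops at `v`. -/
structure MultiGraph (V : Type) where
  E : V → V → ℕ
  loops : V → ℕ
  symm : ∀ u v, E u v = E v u
  noDiag : ∀ v, E v v = 0

variable {V V1 V2 : Type}

/-- The divisor `[v]`. -/
def one [DecidableEq V] (v : V) : V → ℤ := fun w => if w = v then 1 else 0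

/-- Degree of a divisor. -/
def deg [Fintype V] (d : V → ℤ) : ℤ := ∑ v, d v

/-- Effective divisor. -/
def Effective (d : V → ℤ) : Prop := ∀ v, 0 ≤ d v

namespace MultiGraph

/-- Divisor of a rational function (loops contribute nothing). -/
def div [Fintype V] (G : MultiGraph V) (f : V → ℤ) : V → ℤ :=
  fun v => ∑ w, (G.E v w : ℤ) * (f w - f v)

def Principal [Fintype V] (G : MultiGraph V) (d : V → ℤ) : Prop :=
  ∃ f : V → ℤ, d = G.div f

def LinEquiv [Fintype V] (G : MultiGraph V) (d d' : V → ℤ) : Prop :=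
  G.Principal (d' - d)

/-- `d` is linearly equivalent to an effective divisor. -/
def Winnable [Fintype V] (G : MultiGraph V) (d : V → ℤ) : Prop :=
  ∃ e : V → ℤ, Effective e ∧ G.LinEquiv d e

/-- The Baker–Norine rank of a divisor. -/
noncomputable def rank [Fintype V] (G : MultiGraph V) (d : V → ℤ) : ℤ :=
  if G.Winnable d then
    (sSup {s : ℕ | ∀ e : V → ℤ, Effective e → deg e = (s : ℤ) → G.Winnable (d - e)} : ℕ)
  else -1

def Connected (G : MultiGraph V) : Prop :=
  ∀ u v : V, Relation.ReflTransGen (fun a b => 0 < G.E a b) u v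

def Loopless (G : MultiGraph V) : Prop := ∀ v, G.loops v = 0

/-- Number of edges from `v` to vertices outside `A`. -/
def outdeg [Fintype V] [DecidableEq V] (G : MultiGraph V) (A : Finset V) (v : V) : ℕ :=
  ∑ w ∈ Finset.univ.filter (fun w => w ∉ A), G.E v w

/-- `v0`-reduced divisor. -/
def Reduced [Fintype V] [DecidableEq V] (G : MultiGraph V) (v0 : V) (d : V → ℤ) : Prop :=
  (∀ v, v ≠ v0 → 0 ≤ d v) ∧
  ∀ A : Finset V, A.Nonempty → v0 ∉ A → ∃ v ∈ A, d v < (G.outdeg A v : ℤ)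

def valence [Fintype V] (G : MultiGraph V) (v : V) : ℕ :=
  (∑ w, G.E v w) + 2 * G.loops v

/-- Canonical divisor. -/
def K [Fintype V] (G : MultiGraph V) : V → ℤ := fun v => (G.valence v : ℤ) - 2

def edgeCount [Fintype V] (G : MultiGraph V) : ℕ :=
  (∑ v, ∑ w, G.E v w) / 2 + ∑ v, G.loops v

end MultiGraph

open MultiGraph

/-- The graph obtained by joining `G1` and `G2` by a single bridge from `v1` to `v2`. -/
def bridgeJoin [DecidableEq V1] [DecidableEq V2]
    (G1 : MultiGraph V1) (G2 : MultiGraph V2) (v1 : V1) (v2 : V2) :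
    MultiGraph (V1 ⊕ V2) where
  E x y :=
    match x, y with
    | .inl a, .inl b => G1.E a b
    | .inr a, .inr b => G2.E a b
    | .inl a, .inr b => if a = v1 ∧ b = v2 then 1 else 0
    | .inr b, .inl a => if a = v1 ∧ b = v2 then 1 else 0
  loops := Sum.elim G1.loops G2.loops
  symm := by rintro (a | a) (b | b) <;> simp [G1.symm, G2.symm]
  noDiag := by rintro (a | a) <;> simp [G1.noDiag, G2.noDiag]

/-- The virtual loopless graph `Ḡ•` of a vertex-weighted graph `(G, ω)`:
insert a vertex into each loop of `G` and add `ω v` subdivided loops at each `v`.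
The inserted vertices are the pairs `⟨v, i⟩` with `i : Fin (G.loops v + ω v)`,
each joined to `v` by two parallel edges. -/
noncomputable def bullet (G : MultiGraph V) (ω : V → ℕ) :
    MultiGraph (V ⊕ (Σ v : V, Fin (G.loops v + ω v))) where
  E x y :=
    match x, y with
    | .inl u, .inl v => G.E u v
    | .inl u, .inr w => if u = w.1 then 2 else 0
    | .inr w, .inl u => if u = w.1 then 2 else 0
    | .inr _, .inr _ => 0
  loops := fun _ => 0
  symm := by rintro (u | u) (v | v) <;> simp [G.symm]
  noDiag := by rintro (v | v) <;> simp [G.noDiag]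

/-- The rank `r_Ḡ(d)` of a divisor on a vertex-weighted graph `(G, ω)`:
the Baker–Norine rank of `d` on `Ḡ•`. -/
noncomputable def wrank [Fintype V] [DecidableEq V] (G : MultiGraph V) (ω : V → ℕ)
    (d : V → ℤ) : ℤ :=
  (bullet G ω).rank (Sum.elim d 0)

/-- `v` is a base-point of the complete linear system `|d|•` on `Ḡ•`. -/
def wBasePoint [Fintype V] [DecidableEq V] (G : MultiGraph V) (ω : V → ℕ)
    (d : V → ℤ) (v : V) : Prop :=
  wrank G ω (d - one v) = wrank G ω d

/-- Genus of a vertex-weighted graph. -/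
def genus [Fintype V] (G : MultiGraph V) (ω : V → ℕ) : ℤ :=
  (G.edgeCount : ℤ) - Fintype.card V + 1 + ∑ v, (ω v : ℤ)

/-- A vertex-weighted graph of genus `≥ 2` is hyperelliptic if `Ḡ•` carries a
divisor of degree `2` and rank `1`. -/
def Hyperelliptic [Fintype V] [DecidableEq V] (G : MultiGraph V) (ω : V → ℕ) : Prop :=
  2 ≤ genus G ω ∧ ∃ d, deg d = 2 ∧ (bullet G ω).rank d = 1

/-- The canonical divisor `K_Ḡ` of a vertex-weighted graph, viewed as a divisor on `G`. -/
noncomputable def wK [Fintype V] (G : MultiGraph V) (ω : V → ℕ) : V → ℤ :=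
  fun v => (bullet G ω).K (Sum.inl v)

/-!
If `deg d = 1` and `r(d) ≥ 1`, every `d - [v]` is a winnable divisor of degree `0`, hence
principal, so all the divisors `[v]` are linearly equivalent. For an edge `vw`, write
`[w] - [v] = div f` and let `S` be the set where `f` exceeds `f w`. The total of `div f` over `S`
is `-1` if `v ∈ S` and `0` otherwise, while every edge leaving `S` contributes at most `-1` to
it; so `S` is left by exactly one edge, and that edge is `vw`. Every edge is therefore a simple
bridge, the underlying simple graph is a tree, and `G` has `|V| - 1` edges.
-/

section Divisors

variable [Fintype V]

lemma deg_sub (a b : V → ℤ) : deg (a - b) = deg a - deg b := by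
  simp [deg, Finset.sum_sub_distrib]

lemma deg_one [DecidableEq V] (v : V) : deg (one v) = 1 := by
  simp [deg, one]

lemma deg_smul_one [DecidableEq V] (n : ℤ) (v : V) : deg (n • one v) = n := by
  simp [deg, one]

omit [Fintype V] in
lemma Effective.smul_one [DecidableEq V] {n : ℤ} (hn : 0 ≤ n) (v : V) : Effective (n • one v) := by
  intro w
  by_cases h : w = v <;> simp [one, h, hn]

lemma Effective.eq_zero_of_deg_eq_zero {e : V → ℤ} (he : Effective e) (hd : deg e = 0) :
    e = 0 :=
  funext fun v => (Finset.sum_eq_zero_iff_of_nonneg fun u _ => he u).mp hd v (Finset.mem_univ v)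

end Divisors

namespace MultiGraph

variable (G : MultiGraph V)

def toSimpleGraph : SimpleGraph V where
  Adj u v := 0 < G.E u v
  symm := ⟨fun u v h => by rwa [G.symm]⟩
  loopless := ⟨fun v h => by simp [G.noDiag] at h⟩

lemma connected_toSimpleGraph [Nonempty V] (hc : G.Connected) : G.toSimpleGraph.Connected :=
  .mk fun u v => (SimpleGraph.reachable_iff_reflTransGen u v).mpr (hc u v)

variable [Fintype V]

def cut [DecidableEq V] (S : Finset V) : ℕ := ∑ p ∈ S ×ˢ Sᶜ, G.E p.1 p.2

-- Each edge inside `S` contributes opposite amounts at its two ends.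
lemma sum_div_eq [DecidableEq V] (f : V → ℤ) (S : Finset V) :
    ∑ a ∈ S, G.div f a = ∑ p ∈ S ×ˢ Sᶜ, (G.E p.1 p.2 : ℤ) * (f p.2 - f p.1) := by
  have hinner : ∑ a ∈ S, ∑ b ∈ S, (G.E a b : ℤ) * (f b - f a) = 0 := by
    refine CharZero.eq_neg_self_iff.1 ?_
    conv_lhs => rw [Finset.sum_comm]
    simp only [← Finset.sum_neg_distrib]
    refine Finset.sum_congr rfl fun b _ => Finset.sum_congr rfl fun a _ => ?_
    rw [G.symm a b]; ring
  simp only [div, Finset.sum_product]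
  rw [← add_zero (∑ a ∈ S, ∑ b ∈ Sᶜ, _), ← hinner, ← Finset.sum_add_distrib]
  exact Finset.sum_congr rfl fun a _ => (Finset.sum_add_sum_compl S _).symm.trans (add_comm _ _)

lemma deg_div (f : V → ℤ) : deg (G.div f) = 0 := by
  classical
  simpa [deg] using G.sum_div_eq f Finset.univ

lemma div_sub (f g : V → ℤ) : G.div (f - g) = G.div f - G.div g := by
  funext v
  simp only [div, Pi.sub_apply, ← Finset.sum_sub_distrib]
  exact Finset.sum_congr rfl fun w _ => by ring

lemma Winnable.add_effective {G : MultiGraph V} {x c : V → ℤ} (hx : G.Winnable x)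
    (hc : Effective c) : G.Winnable (x + c) := by
  obtain ⟨e, he, f, hf⟩ := hx
  exact ⟨e + c, fun v => add_nonneg (he v) (hc v), f, by rw [← hf]; abel⟩

lemma winnable_sub_one_of_one_le_rank [DecidableEq V] {d : V → ℤ} (hd : 1 ≤ G.rank d) (v : V) :
    G.Winnable (d - one v) := by
  rw [rank] at hd
  split_ifs at hd
  · obtain ⟨s, hs, hs1⟩ := exists_lt_of_lt_csSup' (show 0 < sSup _ by exact_mod_cast hd)
    have hsub := hs _ (Effective.smul_one (Int.natCast_nonneg s) v) (deg_smul_one _ v)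
    convert hsub.add_effective (Effective.smul_one (show (0 : ℤ) ≤ s - 1 by omega) v) using 1
    rw [sub_smul, one_smul]; abel
  · omega

lemma linEquiv_zero_of_winnable_of_deg_eq_zero {x : V → ℤ} (hx : G.Winnable x)
    (hdeg : deg x = 0) : G.LinEquiv x 0 := by
  obtain ⟨e, he, f, hf⟩ := hx
  have he0 : e = 0 := he.eq_zero_of_deg_eq_zero <| by
    have := congrArg deg hf
    rw [deg_div, deg_sub] at this
    omega
  exact ⟨f, by rw [← hf, he0]⟩

lemma linEquiv_one_of_one_le_rank [DecidableEq V] {d : V → ℤ} (hdeg : deg d = 1)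
    (hd : 1 ≤ G.rank d) (v w : V) : G.LinEquiv (one v) (one w) := by
  have principal (u : V) : G.Principal (one u - d) := by
    have := G.linEquiv_zero_of_winnable_of_deg_eq_zero (G.winnable_sub_one_of_one_le_rank hd u)
      (by rw [deg_sub, deg_one, hdeg, sub_self])
    simpa [LinEquiv] using this
  obtain ⟨fv, hfv⟩ := principal v
  obtain ⟨fw, hfw⟩ := principal w
  exact ⟨fw - fv, by rw [div_sub, ← hfv, ← hfw]; abel⟩

section Cut

variable [DecidableEq V] {G} {S : Finset V}

lemma E_le_cut {a b : V} (ha : a ∈ S) (hb : b ∉ S) : G.E a b ≤ G.cut S :=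
  Finset.single_le_sum (s := S ×ˢ Sᶜ) (a := (a, b)) (f := fun p => G.E p.1 p.2)
    (fun _ _ => Nat.zero_le _) (Finset.mem_product.2 ⟨ha, Finset.mem_compl.2 hb⟩)

lemma cut_pos (hc : G.Connected) {a b : V} (ha : a ∈ S) (hb : b ∉ S) : 0 < G.cut S := by
  have : Nonempty V := ⟨a⟩
  obtain ⟨p⟩ := (G.connected_toSimpleGraph hc).preconnected a b
  obtain ⟨d, -, hd₁, hd₂⟩ := p.exists_boundary_dart S ha hb
  exact d.adj.trans_le (E_le_cut hd₁ hd₂)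

lemma sum_div_le_neg_cut {f : V → ℤ} (hS : ∀ a ∈ S, ∀ b ∉ S, f b < f a) :
    ∑ a ∈ S, G.div f a ≤ -G.cut S := by
  rw [sum_div_eq, cut, Nat.cast_sum, ← Finset.sum_neg_distrib]
  refine Finset.sum_le_sum fun p hp => ?_
  obtain ⟨ha, hb⟩ := Finset.mem_product.1 hp
  have := hS _ ha _ (Finset.mem_compl.1 hb)
  nlinarith [Int.natCast_nonneg (G.E p.1 p.2)]

lemma eq_of_cut_eq_one (h : G.cut S = 1) {a b a' b' : V} (ha : a ∈ S) (hb : b ∉ S)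
    (ha' : a' ∈ S) (hb' : b' ∉ S) (hab : 0 < G.E a b) (hab' : 0 < G.E a' b') :
    a = a' ∧ b = b' := by
  by_contra hne
  have hpair : ({(a, b), (a', b')} : Finset (V × V)) ⊆ S ×ˢ Sᶜ := by
    simp [Finset.insert_subset_iff, ha, hb, ha', hb']
  have := Finset.sum_le_sum_of_subset (f := fun p => G.E p.1 p.2) hpair
  rw [Finset.sum_pair (by simpa using hne)] at this
  simp only [cut] at h this
  omega

/-- Since `[w] - [v]` is a principal divisor, the level set where its function exceeds its
value at `w` is left by exactly one edge. -/
lemma exists_cut_eq_one (hc : G.Connected) {v w : V} (hvw : v ≠ w)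
    (h : G.LinEquiv (one v) (one w)) : ∃ S : Finset V, v ∈ S ∧ w ∉ S ∧ G.cut S = 1 := by
  obtain ⟨f, hf⟩ := h
  set S := Finset.univ.filter fun u => f w < f u
  have hS : ∀ a ∈ S, ∀ b ∉ S, f b < f a := by
    intro a ha b hb
    simp only [S, Finset.mem_filter, Finset.mem_univ, true_and] at ha hb
    omega
  have hw : w ∉ S := by simp [S]
  obtain ⟨b, hb⟩ : ∃ b, f w < f b := by
    by_contra! hmax
    have hdiv : G.div f w = 1 := by simpa [one, hvw.symm] using (congrFun hf w).symm
    have : G.div f w ≤ 0 := Finset.sum_nonpos fun u _ =>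
      mul_nonpos_of_nonneg_of_nonpos (Int.natCast_nonneg _) (by linarith [hmax u])
    omega
  have hsum : ∑ a ∈ S, G.div f a = -if v ∈ S then 1 else 0 := by
    simp [← hf, one, Finset.sum_sub_distrib, hw]
  have hpos := cut_pos hc (S := S) (by simpa [S] using hb) hw
  have hle := sum_div_le_neg_cut (G := G) hS
  by_cases hv : v ∈ S
  · refine ⟨S, hv, hw, ?_⟩
    rw [if_pos hv] at hsum
    omega
  · rw [if_neg hv] at hsum
    omega

lemma isBridge_of_cut_eq_one (h : G.cut S = 1) {v w : V} (hv : v ∈ S) (hw : w ∉ S)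
    (hadj : G.toSimpleGraph.Adj v w) : G.toSimpleGraph.IsBridge s(v, w) := by
  refine SimpleGraph.isBridge_iff_forall_walk_mem_edges.2 fun p => ?_
  obtain ⟨d, hd, hd₁, hd₂⟩ := p.exists_boundary_dart S hv hw
  obtain ⟨h₁, h₂⟩ := eq_of_cut_eq_one h hd₁ hd₂ hv hw d.adj hadj
  have : d.edge = s(v, w) := by rw [SimpleGraph.Dart.edge, ← h₁, ← h₂]
  exact this ▸ List.mem_map_of_mem hd

variable (G)

lemma isAcyclic_toSimpleGraph (hc : G.Connected)
    (hequiv : ∀ v w : V, G.LinEquiv (one v) (one w)) : G.toSimpleGraph.IsAcyclic :=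
  SimpleGraph.isAcyclic_iff_forall_adj_isBridge.2 fun v w hadj => by
    obtain ⟨S, hv, hw, hS⟩ := exists_cut_eq_one hc (G.toSimpleGraph.ne_of_adj hadj) (hequiv v w)
    exact isBridge_of_cut_eq_one hS hv hw hadj

lemma E_le_one (hc : G.Connected) (hequiv : ∀ v w : V, G.LinEquiv (one v) (one w)) (v w : V) :
    G.E v w ≤ 1 := by
  rcases Nat.eq_zero_or_pos (G.E v w) with h | hadj
  · omega
  obtain ⟨S, hv, hw, hS⟩ := exists_cut_eq_one hc (G.toSimpleGraph.ne_of_adj hadj) (hequiv v w)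
  exact hS ▸ E_le_cut hv hw

end Cut

lemma sum_sum_E_eq_two_mul_card_edgeFinset (h : ∀ v w, G.E v w ≤ 1) :
    ∑ v, ∑ w, G.E v w = 2 * G.toSimpleGraph.edgeFinset.card := by
  rw [← SimpleGraph.sum_degrees_eq_twice_card_edges]
  refine Finset.sum_congr rfl fun v _ => ?_
  rw [← SimpleGraph.card_neighborFinset_eq_degree, SimpleGraph.neighborFinset_eq_filter,
    Finset.card_filter]
  refine Finset.sum_congr rfl fun w _ => ?_
  have := h v w
  by_cases hadj : 0 < G.E v w <;> simp [toSimpleGraph, hadj] <;> omega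

end MultiGraph

theorem statement_7_general {V : Type} [Fintype V]
    (G : MultiGraph V) (hl : G.Loopless) (hc : G.Connected)
    (hcyc : Fintype.card V ≤ G.edgeCount) :
    ¬ ∃ d : V → ℤ, deg d = 1 ∧ 1 ≤ G.rank d := by
  rintro ⟨d, hdeg, hrank⟩
  have : Nonempty V := by
    by_contra h
    simp [deg, not_nonempty_iff.mp h] at hdeg
  have hequiv := G.linEquiv_one_of_one_le_rank hdeg hrank
  have htree : G.toSimpleGraph.IsTree :=
    ⟨G.connected_toSimpleGraph hc, G.isAcyclic_toSimpleGraph hc hequiv⟩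
  have hsum := G.sum_sum_E_eq_two_mul_card_edgeFinset (G.E_le_one hc hequiv)
  have hcard := htree.card_edgeFinset
  simp only [edgeCount, Finset.sum_eq_zero fun v _ => hl v] at hcyc
  omega

/-- a connected loopless graph with a cycle has no divisor of
degree 1 and rank `≥ 1`. -/
theorem statement_7 {V : Type} [Fintype V] [DecidableEq V]
    (G : MultiGraph V) (hl : G.Loopless) (hc : G.Connected)
    (hcyc : Fintype.card V ≤ G.edgeCount) :
    ¬ ∃ d : V → ℤ, deg d = 1 ∧ 1 ≤ G.rank d :=
  statement_7_general G hl hc hcyc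

end BN
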